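/- If w is a weight satisfying the sharp reverse Hölder inequality (avg_Q w^{r})^{1/r} ≤ 2·avg_Q w for all cubes Q with r = 1 + 1/(τ_n[w]_{A_∞}), then for every 0 < ε ≤ 1, choosing α with αε = 1/(τ_n[w]_{A_∞}), one has M_{L(log L)^ε}(w) ≤ C·(ε·τ_n·[w]_{A_∞})^ε·M_{L^r}(w) ≤ C'·[w]_{A_∞}^ε·Mw pointwise, using log t ≤ t^α/α for t > 1. -/

import Mathlib

open Set MeasureTheory ENNReal

/-- A cube in `ℝⁿ` with lower-left corner `a` and side length `r`. -/
def cube {n : ℕ} (a : Fin n → ℝ) (r : ℝ) : Set (Fin n → ℝ) :=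
  {x | ∀ i, a i ≤ x i ∧ x i ≤ a i + r}

/-- The normalized Luxemburg norm `‖f‖_{A,Q}` over a set `Q`. -/
noncomputable def luxNorm {n : ℕ} (A : ℝ → ℝ) (Q : Set (Fin n → ℝ))
    (f : (Fin n → ℝ) → ℝ) : ℝ≥0∞ :=
  sInf (ENNReal.ofReal '' {lam : ℝ | 0 < lam ∧
    (∫⁻ x in Q, ENNReal.ofReal (A (|f x| / lam))) / volume Q ≤ 1})

/-- The Orlicz maximal operator `M_A f(x) = sup_{Q ∋ x} ‖f‖_{A,Q}`. -/
noncomputable def orliczMax {n : ℕ} (A : ℝ → ℝ) (f : (Fin n → ℝ) → ℝ)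
    (x : Fin n → ℝ) : ℝ≥0∞ :=
  ⨆ (a : Fin n → ℝ) (r : ℝ) (_ : 0 < r) (_ : x ∈ cube a r), luxNorm A (cube a r) f

/-- The (uncentered, over cubes) Hardy–Littlewood maximal function. -/
noncomputable def maximalFn {n : ℕ} (f : (Fin n → ℝ) → ℝ≥0∞) (x : Fin n → ℝ) : ℝ≥0∞ :=
  ⨆ (a : Fin n → ℝ) (r : ℝ) (_ : 0 < r) (_ : x ∈ cube a r),
    (∫⁻ y in cube a r, f y) / volume (cube a r)

/-- The power maximal operator `M_{L^r} w(x) = sup_{Q ∋ x} (avg_Q w^r)^{1/r}`. -/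
noncomputable def powerMax {n : ℕ} (r : ℝ) (w : (Fin n → ℝ) → ℝ)
    (x : Fin n → ℝ) : ℝ≥0∞ :=
  ⨆ (a : Fin n → ℝ) (s : ℝ) (_ : 0 < s) (_ : x ∈ cube a s),
    ((∫⁻ y in cube a s, ENNReal.ofReal (w y) ^ r) / volume (cube a s)) ^ (1 / r)

/-!
With `s = 1/(τK)` and `α = s/ε`, the bound `log t ≤ t^α/α` gives
`t (1 + log⁺ t)^ε ≤ (1 + ετK)^ε t^(1+s)` for `t > 1`, while `t ≤ 1/2 + 2^s t^(1+s)` for `t ≤ 1`.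
So the Young function is dominated by `1/2 + B t^r` with `r = 1 + s`, and testing the
Luxemburg norm at any `λ > (2B)^(1/r) (avg_Q w^r)^(1/r)` makes the average of `A(w/λ)` at
most `1/2 + 1/2`. As `ε ≤ 1`, `(1 + ετK)^ε ≤ 1 + (ετK)^ε`, and `(ετK)^ε ≥ e⁻¹ min τ 1`, so
`2B ≤ C (ετK)^ε`. The second inequality is the reverse Hölder inequality on each cube
together with `(ετK)^ε ≤ max 1 τ · K^ε`.
-/

namespace Real

lemma le_half_add_two_rpow_mul_rpow {s t : ℝ} (hs : 0 ≤ s) (ht : 0 ≤ t) :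
    t ≤ 1 / 2 + 2 ^ s * t ^ (1 + s) := by
  rcases le_or_gt t (1 / 2) with ht2 | ht2
  · have : 0 ≤ 2 ^ s * t ^ (1 + s) := by positivity
    linarith
  · have h2t : 1 ≤ (2 * t) ^ s := one_le_rpow (by linarith) hs
    calc t ≤ t * (2 * t) ^ s := le_mul_of_one_le_right ht h2t
      _ = 2 ^ s * t ^ (1 + s) := by
        rw [mul_rpow zero_le_two ht, rpow_add (by linarith), rpow_one]; ring
      _ ≤ 1 / 2 + 2 ^ s * t ^ (1 + s) := by linarith

lemma one_add_log_rpow_le {ε s t : ℝ} (hε : 0 < ε) (hs : 0 < s) (ht : 1 ≤ t) :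
    (1 + log t) ^ ε ≤ (1 + ε / s) ^ ε * t ^ s := by
  have hα : 0 < s / ε := div_pos hs hε
  have hlog : log t ≤ ε / s * t ^ (s / ε) := by
    simpa [div_eq_mul_inv, mul_comm] using log_le_rpow_div (by linarith) hα
  have hone : 1 ≤ t ^ (s / ε) := one_le_rpow ht hα.le
  have hbase : 1 + log t ≤ (1 + ε / s) * t ^ (s / ε) := by
    have : 0 ≤ ε / s := by positivity
    nlinarith
  calc (1 + log t) ^ ε ≤ ((1 + ε / s) * t ^ (s / ε)) ^ ε :=
        rpow_le_rpow (by linarith [log_nonneg ht]) hbase hε.le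
    _ = (1 + ε / s) ^ ε * t ^ s := by
        rw [mul_rpow (by positivity) (by positivity), ← rpow_mul (by linarith),
          div_mul_cancel₀ s hε.ne']

lemma mul_one_add_max_log_rpow_le {ε s t : ℝ} (hε : 0 < ε) (hs : 0 < s) (ht : 0 ≤ t) :
    t * (1 + max (log t) 0) ^ ε ≤ 1 / 2 + (2 ^ s + (1 + ε / s) ^ ε) * t ^ (1 + s) := by
  have hsmall := le_half_add_two_rpow_mul_rpow hs.le ht
  have hpos : 0 ≤ (1 + ε / s) ^ ε * t ^ (1 + s) := by positivity
  rcases le_or_gt t 1 with ht1 | ht1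
  · rw [max_eq_right (log_nonpos ht ht1), add_zero, one_rpow, mul_one]
    linarith
  · have hlarge : t * (1 + log t) ^ ε ≤ (1 + ε / s) ^ ε * t ^ (1 + s) := by
      calc t * (1 + log t) ^ ε ≤ t * ((1 + ε / s) ^ ε * t ^ s) :=
            mul_le_mul_of_nonneg_left (one_add_log_rpow_le hε hs ht1.le) ht
        _ = (1 + ε / s) ^ ε * t ^ (1 + s) := by
            rw [rpow_add (by linarith), rpow_one]; ring
    have : 0 ≤ 2 ^ s * t ^ (1 + s) := by positivity
    rw [max_eq_left (log_nonneg ht1.le)]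
    linarith

lemma exp_neg_one_le_rpow_self {ε : ℝ} (hε : 0 < ε) : exp (-1) ≤ ε ^ ε := by
  rw [rpow_def_of_pos hε, exp_le_exp]
  have := one_sub_inv_le_log_of_pos hε
  have := mul_le_mul_of_nonneg_right this hε.le
  rw [sub_mul, inv_mul_cancel₀ hε.ne', one_mul] at this
  linarith

lemma min_le_rpow {x ε : ℝ} (hx : 0 < x) (hε : 0 ≤ ε) (hε1 : ε ≤ 1) :
    min x 1 ≤ x ^ ε := by
  rcases le_or_gt x 1 with h | h
  · exact (min_le_left _ _).trans (by simpa using rpow_le_rpow_of_exponent_ge hx h hε1)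
  · exact (min_le_right _ _).trans (one_le_rpow h.le hε)

lemma rpow_le_max_one {x ε : ℝ} (hx : 0 ≤ x) (hε : 0 ≤ ε) (hε1 : ε ≤ 1) :
    x ^ ε ≤ max 1 x := by
  rcases le_or_gt x 1 with h | h
  · exact (rpow_le_one hx h hε).trans (le_max_left _ _)
  · exact (rpow_le_self_of_one_le h.le hε1).trans (le_max_right _ _)

end Real

lemma cube_volume {n : ℕ} (a : Fin n → ℝ) (r : ℝ) :
    volume (cube a r) = ENNReal.ofReal r ^ n := by
  have : cube a r = Set.pi Set.univ fun i => Set.Icc (a i) (a i + r) := by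
    ext x; simp [cube, Set.mem_Icc, Pi.le_def, forall_and]
  rw [this, volume_pi_pi]
  simp [Real.volume_Icc]

lemma cube_volume_ne_zero {n : ℕ} (a : Fin n → ℝ) {r : ℝ} (hr : 0 < r) :
    volume (cube a r) ≠ 0 := by
  rw [cube_volume]
  exact pow_ne_zero _ (by simpa using hr)

lemma cube_volume_ne_top {n : ℕ} (a : Fin n → ℝ) (r : ℝ) : volume (cube a r) ≠ ⊤ := by
  simp [cube_volume]

section Luxemburg

variable {n : ℕ} {A : ℝ → ℝ} {Q : Set (Fin n → ℝ)} {f : (Fin n → ℝ) → ℝ}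

lemma luxNorm_le_ofReal {lam : ℝ} (hlam : 0 < lam)
    (h : (∫⁻ x in Q, ENNReal.ofReal (A (|f x| / lam))) / volume Q ≤ 1) :
    luxNorm A Q f ≤ ENNReal.ofReal lam :=
  sInf_le ⟨lam, ⟨hlam, h⟩, rfl⟩

variable {B r : ℝ}

lemma setLAverage_le_half_add_of_le_half_add_rpow
    (hA : ∀ t, 0 ≤ t → A t ≤ 1 / 2 + B * t ^ r) (hB : 0 ≤ B) (hr : 0 ≤ r)
    (hQ₀ : volume Q ≠ 0) (hQ : volume Q ≠ ⊤) {lam : ℝ} (hlam : 0 < lam) :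
    (∫⁻ x in Q, ENNReal.ofReal (A (|f x| / lam))) / volume Q ≤ ENNReal.ofReal (1 / 2) +
      ENNReal.ofReal (B / lam ^ r) *
        ((∫⁻ x in Q, ENNReal.ofReal |f x| ^ r) / volume Q) := by
  refine ENNReal.div_le_of_le_mul ?_
  have hpt : ∀ x, ENNReal.ofReal (A (|f x| / lam)) ≤
      ENNReal.ofReal (1 / 2) + ENNReal.ofReal (B / lam ^ r) * ENNReal.ofReal |f x| ^ r := by
    intro x
    have ht : 0 ≤ |f x| / lam := by positivity
    calc ENNReal.ofReal (A (|f x| / lam))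
        ≤ ENNReal.ofReal (1 / 2 + B / lam ^ r * |f x| ^ r) := by
          refine ENNReal.ofReal_le_ofReal ((hA _ ht).trans_eq ?_)
          rw [Real.div_rpow (abs_nonneg _) hlam.le]; ring
      _ = _ := by
          rw [ENNReal.ofReal_add (by norm_num) (by positivity),
            ENNReal.ofReal_mul (by positivity), ENNReal.ofReal_rpow_of_nonneg (abs_nonneg _) hr]
  calc ∫⁻ x in Q, ENNReal.ofReal (A (|f x| / lam))
      ≤ ∫⁻ x in Q, (ENNReal.ofReal (1 / 2) +
          ENNReal.ofReal (B / lam ^ r) * ENNReal.ofReal |f x| ^ r) := lintegral_mono hpt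
    _ = _ := by
        rw [lintegral_add_left measurable_const, setLIntegral_const,
          lintegral_const_mul' _ _ ENNReal.ofReal_ne_top, add_mul, mul_assoc,
          ENNReal.div_mul_cancel hQ₀ hQ]

lemma luxNorm_le_of_le_half_add_rpow (hA : ∀ t, 0 ≤ t → A t ≤ 1 / 2 + B * t ^ r)
    (hB : 0 < B) (hr : 0 < r) (hQ₀ : volume Q ≠ 0) (hQ : volume Q ≠ ⊤) :
    luxNorm A Q f ≤ ENNReal.ofReal ((2 * B) ^ (1 / r)) *
      ((∫⁻ x in Q, ENNReal.ofReal |f x| ^ r) / volume Q) ^ (1 / r) := by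
  set a := (∫⁻ x in Q, ENNReal.ofReal |f x| ^ r) / volume Q
  by_cases ha : a = ⊤
  · rw [ha, ENNReal.top_rpow_of_pos (by positivity), ENNReal.mul_top (by simp; positivity)]
    exact le_top
  set α := a.toReal
  have hα : 0 ≤ α := ENNReal.toReal_nonneg
  set m := (2 * B * α) ^ (1 / r)
  have hm : 0 ≤ m := by positivity
  have hlux : luxNorm A Q f ≤ ENNReal.ofReal m := by
    refine ENNReal.le_of_forall_pos_le_add fun δ hδ _ => ?_
    have hlam : 0 < m + δ := by positivity
    rw [← ENNReal.ofReal_coe_nnreal, ← ENNReal.ofReal_add hm δ.coe_nonneg]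
    refine luxNorm_le_ofReal hlam ((setLAverage_le_half_add_of_le_half_add_rpow hA hB.le hr.le
      hQ₀ hQ hlam).trans ?_)
    have hmr : 2 * B * α ≤ (m + δ) ^ r := by
      calc 2 * B * α = m ^ r := by
            rw [← Real.rpow_mul (by positivity), one_div_mul_cancel hr.ne', Real.rpow_one]
        _ ≤ (m + δ) ^ r := Real.rpow_le_rpow hm (by simp) hr.le
    have hsmall : B / (m + δ) ^ r * α ≤ 1 / 2 := by
      rw [div_mul_eq_mul_div, div_le_iff₀ (by positivity)]; linarith
    show ENNReal.ofReal (1 / 2) + ENNReal.ofReal (B / (m + δ) ^ r) * a ≤ 1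
    rw [← ENNReal.ofReal_toReal ha, ← ENNReal.ofReal_mul (by positivity),
      ← ENNReal.ofReal_add (by norm_num) (by positivity), ← ENNReal.ofReal_one]
    exact ENNReal.ofReal_le_ofReal (by linarith)
  calc luxNorm A Q f ≤ ENNReal.ofReal ((2 * B * α) ^ (1 / r)) := hlux
    _ = _ := by
      rw [Real.mul_rpow (by positivity) hα, ENNReal.ofReal_mul (by positivity),
        ← ENNReal.ofReal_rpow_of_nonneg hα (by positivity), ENNReal.ofReal_toReal ha]

end Luxemburg

/-- `exp (-1) * min τ 1` is a lower bound for `(ε τ K) ^ ε`, which absorbs the additive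
constants of the Young-function estimate into the factor `(ε τ K) ^ ε`. -/
noncomputable def loglogMaxConst (τ : ℝ) : ℝ :=
  2 * ((2 ^ (1 / τ) + 1) / (Real.exp (-1) * min τ 1) + 1)

section Constants

variable {τ K ε : ℝ}

lemma exp_neg_one_mul_min_le_rpow (hτ : 0 < τ) (hK : 1 ≤ K) (hε : 0 < ε) (hε1 : ε ≤ 1) :
    Real.exp (-1) * min τ 1 ≤ (ε * τ * K) ^ ε := by
  have hτK : τ ≤ τ * K := le_mul_of_one_le_right hτ.le hK
  calc Real.exp (-1) * min τ 1 ≤ ε ^ ε * (τ * K) ^ ε := by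
        gcongr
        · exact Real.exp_neg_one_le_rpow_self hε
        · exact (min_le_min_right 1 hτK).trans (Real.min_le_rpow (by positivity) hε.le hε1)
    _ = (ε * τ * K) ^ ε := by rw [mul_assoc, Real.mul_rpow hε.le (by positivity)]

lemma two_mul_rpow_add_rpow_le_loglogMaxConst_mul (hτ : 0 < τ) (hK : 1 ≤ K) (hε : 0 < ε)
    (hε1 : ε ≤ 1) :
    2 * (2 ^ (1 / (τ * K)) + (1 + ε * τ * K) ^ ε) ≤ loglogMaxConst τ * (ε * τ * K) ^ ε := by
  set X := (ε * τ * K) ^ ε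
  have hm : 0 < Real.exp (-1) * min τ 1 := by positivity
  have hmX := exp_neg_one_mul_min_le_rpow hτ hK hε hε1
  have htwo : (2 : ℝ) ^ (1 / (τ * K)) ≤ 2 ^ (1 / τ) :=
    Real.rpow_le_rpow_of_exponent_le one_le_two
      (one_div_le_one_div_of_le hτ (le_mul_of_one_le_right hτ.le hK))
  have hsub : (1 + ε * τ * K) ^ ε ≤ 1 + X := by
    simpa using Real.rpow_add_le_add_rpow zero_le_one (by positivity : 0 ≤ ε * τ * K) hε.le hε1
  have hconst : 2 ^ (1 / τ) + 1 ≤ (2 ^ (1 / τ) + 1) / (Real.exp (-1) * min τ 1) * X := by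
    rw [div_mul_eq_mul_div, le_div_iff₀ hm]
    exact mul_le_mul_of_nonneg_left hmX (by positivity)
  rw [loglogMaxConst]
  linarith

lemma rpow_le_max_one_mul_rpow (hτ : 0 < τ) (hK : 1 ≤ K) (hε : 0 < ε) (hε1 : ε ≤ 1) :
    (ε * τ * K) ^ ε ≤ max 1 τ * K ^ ε :=
  calc (ε * τ * K) ^ ε ≤ (τ * K) ^ ε := by
        gcongr; nlinarith [mul_le_mul_of_nonneg_left hε1 (by positivity : 0 ≤ τ * K)]
    _ = τ ^ ε * K ^ ε := Real.mul_rpow hτ.le (by linarith)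
    _ ≤ max 1 τ * K ^ ε := by gcongr; exact Real.rpow_le_max_one hτ.le hε.le hε1

end Constants

lemma luxNorm_loglog_cube_le {n : ℕ} {τ K ε : ℝ} (hτ : 0 < τ) (hK : 1 ≤ K) (hε : 0 < ε)
    (hε1 : ε ≤ 1) (f : (Fin n → ℝ) → ℝ) (a : Fin n → ℝ) {s : ℝ} (hs : 0 < s) :
    luxNorm (fun t : ℝ => t * (1 + max (Real.log t) 0) ^ ε) (cube a s) f ≤
      ENNReal.ofReal (loglogMaxConst τ) * ENNReal.ofReal ((ε * τ * K) ^ ε) *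
        ((∫⁻ y in cube a s, ENNReal.ofReal |f y| ^ (1 + 1 / (τ * K))) / volume (cube a s))
          ^ (1 / (1 + 1 / (τ * K))) := by
  set B := 2 ^ (1 / (τ * K)) + (1 + ε * τ * K) ^ ε
  have hB : 1 ≤ B := le_add_of_le_of_nonneg (Real.one_le_rpow one_le_two (by positivity))
    (by positivity)
  have hA : ∀ t, 0 ≤ t →
      t * (1 + max (Real.log t) 0) ^ ε ≤ 1 / 2 + B * t ^ (1 + 1 / (τ * K)) := by
    intro t ht
    have := Real.mul_one_add_max_log_rpow_le hε (by positivity : 0 < 1 / (τ * K)) ht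
    rwa [div_div_eq_mul_div, div_one, ← mul_assoc] at this
  refine (luxNorm_le_of_le_half_add_rpow hA (by linarith) (by positivity)
    (cube_volume_ne_zero a hs) (cube_volume_ne_top a s)).trans ?_
  rw [← ENNReal.ofReal_mul (by unfold loglogMaxConst; positivity)]
  gcongr
  have hr : 1 ≤ 1 + 1 / (τ * K) := le_add_of_nonneg_right (by positivity)
  calc (2 * B) ^ (1 / (1 + 1 / (τ * K))) ≤ 2 * B :=
        Real.rpow_le_self_of_one_le (by linarith) (div_le_one_of_le₀ hr (by positivity))
    _ ≤ loglogMaxConst τ * (ε * τ * K) ^ ε :=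
        two_mul_rpow_add_rpow_le_loglogMaxConst_mul hτ hK hε hε1

lemma iSup_cube_le_mul_iSup_cube {n : ℕ} {F G : (Fin n → ℝ) → ℝ → ℝ≥0∞} (c : ℝ≥0∞)
    (h : ∀ a s, 0 < s → F a s ≤ c * G a s) (x : Fin n → ℝ) :
    ⨆ (a : Fin n → ℝ) (s : ℝ) (_ : 0 < s) (_ : x ∈ cube a s), F a s ≤
      c * ⨆ (a : Fin n → ℝ) (s : ℝ) (_ : 0 < s) (_ : x ∈ cube a s), G a s := by
  simp only [ENNReal.mul_iSup]
  exact iSup₂_mono fun a s => iSup₂_mono fun hs _ => h a s hs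

/-- If `w` satisfies the sharp reverse Hölder inequality with exponent
`r = 1 + 1/(τₙ K)` (where `K = [w]_{A∞}`), then for `0 < ε ≤ 1`,
`M_{L(log L)^ε} w ≤ C (ε τₙ K)^ε M_{L^r} w ≤ C' K^ε M w` pointwise. -/
theorem loglog_max_vs_max (n : ℕ) (τ : ℝ) (hτ : 0 < τ) :
    ∃ C C' : ℝ≥0∞, 0 < C ∧ C ≠ ⊤ ∧ 0 < C' ∧ C' ≠ ⊤ ∧
      ∀ (w : (Fin n → ℝ) → ℝ) (_ : Measurable w) (_ : ∀ x, 0 ≤ w x)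
        (K : ℝ) (_ : 1 ≤ K) (ε : ℝ) (_ : 0 < ε) (_ : ε ≤ 1),
        -- sharp reverse Hölder inequality with exponent `r = 1 + 1/(τ K)`
        (∀ (a : Fin n → ℝ) (s : ℝ), 0 < s →
          ((∫⁻ y in cube a s, ENNReal.ofReal (w y) ^ (1 + 1 / (τ * K))) /
              volume (cube a s)) ^ (1 / (1 + 1 / (τ * K)))
            ≤ 2 * (∫⁻ y in cube a s, ENNReal.ofReal (w y)) / volume (cube a s)) →
        ∀ x : Fin n → ℝ,
          orliczMax (fun t : ℝ => t * (1 + max (Real.log t) 0) ^ ε) w x ≤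
              C * ENNReal.ofReal ((ε * τ * K) ^ ε) * powerMax (1 + 1 / (τ * K)) w x ∧
            C * ENNReal.ofReal ((ε * τ * K) ^ ε) * powerMax (1 + 1 / (τ * K)) w x ≤
              C' * ENNReal.ofReal (K ^ ε) * maximalFn (fun y => ENNReal.ofReal (w y)) x := by
  set C := ENNReal.ofReal (loglogMaxConst τ)
  have hC : 0 < C := ENNReal.ofReal_pos.2 (by unfold loglogMaxConst; positivity)
  refine ⟨C, 2 * C * ENNReal.ofReal (max 1 τ), hC, ENNReal.ofReal_ne_top,
    by simpa [hτ] using hC, by finiteness, ?_⟩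
  intro w _ hw₀ K hK ε hε hε1 hRH x
  have hlux : ∀ a s, 0 < s → luxNorm (fun t : ℝ => t * (1 + max (Real.log t) 0) ^ ε)
      (cube a s) w ≤ C * ENNReal.ofReal ((ε * τ * K) ^ ε) *
        ((∫⁻ y in cube a s, ENNReal.ofReal (w y) ^ (1 + 1 / (τ * K))) / volume (cube a s))
          ^ (1 / (1 + 1 / (τ * K))) := fun a s hs => by
    simpa only [abs_of_nonneg (hw₀ _)] using luxNorm_loglog_cube_le hτ hK hε hε1 w a hs
  have hpower : powerMax (1 + 1 / (τ * K)) w x ≤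
      2 * maximalFn (fun y => ENNReal.ofReal (w y)) x :=
    iSup_cube_le_mul_iSup_cube 2 (fun a s hs => (hRH a s hs).trans_eq (mul_div_assoc _ _ _)) x
  refine ⟨iSup_cube_le_mul_iSup_cube _ hlux x, ?_⟩
  calc C * ENNReal.ofReal ((ε * τ * K) ^ ε) * powerMax (1 + 1 / (τ * K)) w x
      ≤ C * (ENNReal.ofReal (max 1 τ) * ENNReal.ofReal (K ^ ε)) *
          (2 * maximalFn (fun y => ENNReal.ofReal (w y)) x) := by
        rw [← ENNReal.ofReal_mul (by positivity : (0 : ℝ) ≤ max 1 τ)]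
        gcongr
        exact rpow_le_max_one_mul_rpow hτ hK hε hε1
    _ = 2 * C * ENNReal.ofReal (max 1 τ) * ENNReal.ofReal (K ^ ε) *
          maximalFn (fun y => ENNReal.ofReal (w y)) x := by ring
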